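/- If an alphabet Σ is partitioned into finitely many groups Σ_T (indexed by tasks T) and an ω-word u over an alphabet of (assignment, service) pairs satisfies the locality condition—each letter's service belongs to exactly one group and only modifies propositions of that group—then swapping two adjacent letters whose services belong to different groups yields a word with the same per-group projections: for every T, π_T(u) = π_T(u') where u' is u with positions i, i+1 swapped. -/

import Mathlib

/-- The projection of (a prefix of length `n` of) an ω-word onto task `S`: keep the
letters whose service belongs to `Σ_S`, restricting the assignment to the propositions
of `P_S`. -/
def projPrefix {𝒯 P Srv : Type*} [DecidableEq 𝒯] (taskP : P → 𝒯) (taskS : Srv → 𝒯)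
    (S : 𝒯) (u : ℕ → (P → Bool) × Srv) (n : ℕ) :
    List (({p : P // taskP p = S} → Bool) × Srv) :=
  ((((List.range n).map u).filter fun l => decide (taskS l.2 = S)).map
    fun l => (fun p => l.1 p.1, l.2))

/-- The word obtained from `u` by swapping the letters at positions `i` and `i + 1`,
adjusting the position-`i` assignment so that locality is preserved: it equals
`κ_{i-1}` updated on the propositions of the task of `σ_{i+1}` by `κ_{i+1}`. -/
def swapWord {𝒯 P Srv : Type*} [DecidableEq 𝒯] (taskP : P → 𝒯) (taskS : Srv → 𝒯)
    (u : ℕ → (P → Bool) × Srv) (i : ℕ) : ℕ → (P → Bool) × Srv := fun j =>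
  if j = i then
    (fun p => if taskP p = taskS (u (i + 1)).2 then (u (i + 1)).1 p else (u (i - 1)).1 p,
      (u (i + 1)).2)
  else if j = i + 1 then ((u (i + 1)).1, (u i).2)
  else u j

/-! The swap changes only the letters at positions `i` and `i + 1`, whose services lie in
different tasks, so every projection sees at most one of them; there it sees the same service,
and locality makes the adjusted assignment agree with the original one on the propositions of
that service's task. -/

section

variable {𝒯 P Srv : Type*} [DecidableEq 𝒯] (taskP : P → 𝒯) (taskS : Srv → 𝒯)

def projLetters (S : 𝒯) (w : List ((P → Bool) × Srv)) :
    List (({p : P // taskP p = S} → Bool) × Srv) :=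
  (w.filter fun l => decide (taskS l.2 = S)).map fun l => (fun p => l.1 p.1, l.2)

theorem projPrefix_eq_projLetters (S : 𝒯) (u : ℕ → (P → Bool) × Srv) (n : ℕ) :
    projPrefix taskP taskS S u n = projLetters taskP taskS S ((List.range n).map u) :=
  rfl

theorem projLetters_append (S : 𝒯) (w₁ w₂ : List ((P → Bool) × Srv)) :
    projLetters taskP taskS S (w₁ ++ w₂) =
      projLetters taskP taskS S w₁ ++ projLetters taskP taskS S w₂ := by
  simp [projLetters, List.filter_append]

theorem projLetters_pair_comm {a b a' b' : (P → Bool) × Srv}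
    (hab : taskS a.2 ≠ taskS b.2) (ha' : a'.2 = b.2) (hb' : b'.2 = a.2)
    (ha'b : ∀ p, taskP p = taskS b.2 → a'.1 p = b.1 p)
    (hb'a : ∀ p, taskP p = taskS a.2 → b'.1 p = a.1 p) (S : 𝒯) :
    projLetters taskP taskS S [a', b'] = projLetters taskP taskS S [a, b] := by
  by_cases hSa : taskS a.2 = S
  · have hSb : taskS b.2 ≠ S := hSa ▸ hab.symm
    have hrestrict : (fun p : {p // taskP p = S} => b'.1 p.1) = fun p => a.1 p.1 :=
      funext fun p => hb'a p.1 (p.2.trans hSa.symm)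
    simp [projLetters, ha', hb', hSa, hSb, hrestrict]
  by_cases hSb : taskS b.2 = S
  · have hrestrict : (fun p : {p // taskP p = S} => a'.1 p.1) = fun p => b.1 p.1 :=
      funext fun p => ha'b p.1 (p.2.trans hSb.symm)
    simp [projLetters, ha', hb', hSa, hSb, hrestrict]
  simp [projLetters, ha', hb', hSa, hSb]

end

theorem range_add_two_add (i n : ℕ) :
    List.range (i + 2 + n) = List.range i ++ [i, i + 1] ++ (List.range n).map (i + 2 + ·) := by
  rw [List.range_add]
  simp [List.range_succ]

section

variable {𝒯 P Srv : Type*} [DecidableEq 𝒯] (taskP : P → 𝒯) (taskS : Srv → 𝒯)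
  (u : ℕ → (P → Bool) × Srv) (i : ℕ)

theorem swapWord_self : swapWord taskP taskS u i i =
    (fun p => if taskP p = taskS (u (i + 1)).2 then (u (i + 1)).1 p else (u (i - 1)).1 p,
      (u (i + 1)).2) :=
  if_pos rfl

theorem swapWord_succ : swapWord taskP taskS u i (i + 1) = ((u (i + 1)).1, (u i).2) := by
  simp [swapWord]

theorem map_swapWord_range (n : ℕ) :
    (List.range (i + 2 + n)).map (swapWord taskP taskS u i) =
      (List.range i).map u ++ [swapWord taskP taskS u i i, swapWord taskP taskS u i (i + 1)] ++
        ((List.range n).map (i + 2 + ·)).map u := by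
  have hfar : ∀ j, j ≠ i → j ≠ i + 1 → swapWord taskP taskS u i j = u j := fun j h₀ h₁ => by
    simp [swapWord, h₀, h₁]
  have hprefix : (List.range i).map (swapWord taskP taskS u i) = (List.range i).map u := by
    refine List.map_congr_left fun j hj => hfar j ?_ ?_ <;>
      simp only [List.mem_range] at hj <;> omega
  have hsuffix : ((List.range n).map (i + 2 + ·)).map (swapWord taskP taskS u i) =
      ((List.range n).map (i + 2 + ·)).map u := by
    refine List.map_congr_left fun j hj => ?_
    obtain ⟨k, -, rfl⟩ := List.mem_map.mp hj
    exact hfar _ (by omega) (by omega)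
  rw [range_add_two_add, List.map_append, List.map_append, hprefix, hsuffix]
  rfl

end

theorem swap_preserves_projections_general {𝒯 P Srv : Type*} [DecidableEq 𝒯]
    (taskP : P → 𝒯) (taskS : Srv → 𝒯) (u : ℕ → (P → Bool) × Srv)
    (hloc : ∀ i : ℕ, ∀ p : P,
      taskP p ≠ taskS (u (i + 1)).2 → (u (i + 1)).1 p = (u i).1 p)
    (i : ℕ) (T T' : 𝒯)
    (hT : taskS (u i).2 = T) (hT' : taskS (u (i + 1)).2 = T') (hne : T ≠ T') :
    ∀ (S : 𝒯) (n : ℕ),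
      projPrefix taskP taskS S (swapWord taskP taskS u i) (i + 2 + n) =
        projPrefix taskP taskS S u (i + 2 + n) := by
  intro S n
  have hpair : taskS (u i).2 ≠ taskS (u (i + 1)).2 := by rwa [hT, hT']
  rw [projPrefix_eq_projLetters, projPrefix_eq_projLetters, map_swapWord_range,
    range_add_two_add, List.map_append, List.map_append, projLetters_append,
    projLetters_append, projLetters_append, projLetters_append, List.map_cons, List.map_cons,
    List.map_nil, swapWord_self, swapWord_succ]
  congr 2
  refine projLetters_pair_comm taskP taskS hpair ?_ ?_ ?_ ?_ S
  · rfl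
  · rfl
  · exact fun p hp => if_pos hp
  · exact fun p hp => hloc i p (hp ▸ hpair)

/-- Swapping two adjacent letters of a local ω-word whose services belong to different
tasks leaves all per-task projections unchanged. -/
theorem swap_preserves_projections {𝒯 P Srv : Type*} [DecidableEq 𝒯]
    (taskP : P → 𝒯) (taskS : Srv → 𝒯) (u : ℕ → (P → Bool) × Srv)
    (hloc : ∀ i : ℕ, ∀ p : P,
      taskP p ≠ taskS (u (i + 1)).2 → (u (i + 1)).1 p = (u i).1 p)
    (i : ℕ) (hi : 1 ≤ i) (T T' : 𝒯)
    (hT : taskS (u i).2 = T) (hT' : taskS (u (i + 1)).2 = T') (hne : T ≠ T') :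
    ∀ (S : 𝒯) (n : ℕ),
      projPrefix taskP taskS S (swapWord taskP taskS u i) (i + 2 + n) =
        projPrefix taskP taskS S u (i + 2 + n) :=
  swap_preserves_projections_general taskP taskS u hloc i T T' hT hT' hne
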